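/- arXiv:2506.23264 — 6 statements merged into one kernel-verified Lean document; each statement's English description precedes it below -/
import Mathlib

section
/- For every integer k ≥ 2, g(k) ≤ G(k), where G(k) is the maximal gap between an integer m ∈ [3, k+1] and the largest prime not exceeding m. -/
/-!
For `m ≤ k` let `p` be the largest prime with `p ≤ m + 1`; then `r = p - 1` lies in the window
`[m - G(k), m]`. Since `C(p - 1, i) ≡ (-1)^i (mod p)`, the equation for `r = p - 1` alone forces
`α 0 = ⋯ = α (p - 1)`, and each following equation `r + 1 ≤ m` forces `α (r + 1)` to agree.
-/

open Finset

/-- g(k): the smallest g ≥ 0 such that for every m ∈ [2,k], the binary system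
Σ_{0 ≤ i ≤ r} (-1)^i C(r,i) α_i = 0 (r = m-g, ..., m) with α ∈ {0,1}^{m+1}
has only the all-zero and all-one solutions. -/
noncomputable def gDef (k : ℕ) : ℕ :=
  sInf {g : ℕ |
    ∀ m : ℕ, 2 ≤ m → m ≤ k →
      ∀ α : ℕ → Bool,
        (∀ r ∈ Finset.Icc (m - g) m,
          ∑ i ∈ Finset.range (r + 1),
            (-1 : ℤ) ^ i * (r.choose i) * (if α i then 1 else 0) = 0) →
        ∀ i ≤ m, α i = α 0}

/-- The largest prime not exceeding m. -/
noncomputable def largestPrimeLe (m : ℕ) : ℕ := sSup {p : ℕ | p.Prime ∧ p ≤ m}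

/-- G(k): the maximal gap between an integer m ∈ [3, k+1] and the largest prime ≤ m. -/
noncomputable def Ggap (k : ℕ) : ℕ :=
  (Finset.Icc 3 (k + 1)).sup (fun m => m - largestPrimeLe m)

/-- The left-hand side of the `r`-th equation of the system. -/
def altBinomSum (α : ℕ → Bool) (r : ℕ) : ℤ :=
  ∑ i ∈ range (r + 1), (-1 : ℤ) ^ i * (r.choose i) * (if α i then 1 else 0)

lemma Nat.Prime.cast_choose_pred {p : ℕ} (hp : p.Prime) {i : ℕ} (hi : i < p) :
    ((p - 1).choose i : ZMod p) = (-1) ^ i := by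
  induction i with
  | zero => simp
  | succ i ih =>
    have hpascal : p.choose (i + 1) = (p - 1).choose i + (p - 1).choose (i + 1) := by
      rw [← Nat.choose_succ_succ', Nat.sub_add_cancel hp.one_le]
    have hdvd : ((p.choose (i + 1) : ℕ) : ZMod p) = 0 :=
      (ZMod.natCast_eq_zero_iff _ _).mpr (hp.dvd_choose_self i.succ_ne_zero hi)
    rw [hpascal, Nat.cast_add, ih (by omega)] at hdvd
    rw [pow_succ]
    linear_combination hdvd

/-- Modulo `p`, the equation for `r = p - 1` says that `p` divides the number of ones among
`α 0, …, α (p - 1)`, which forces that number to be `0` or `p`. -/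
lemma eq_of_altBinomSum_pred_prime {p : ℕ} (hp : p.Prime) {α : ℕ → Bool}
    (h : altBinomSum α (p - 1) = 0) : ∀ i ≤ p - 1, α i = α 0 := by
  have hrange : p - 1 + 1 = p := Nat.sub_add_cancel hp.one_le
  have hdvd : p ∣ #{i ∈ range p | α i} := by
    rw [← ZMod.natCast_eq_zero_iff, ← sum_boole]
    have := congrArg (Int.cast : ℤ → ZMod p) h
    rw [altBinomSum, hrange, Int.cast_sum, Int.cast_zero] at this
    refine (sum_congr rfl fun i hi => ?_).trans this
    push_cast
    rw [hp.cast_choose_pred (mem_range.mp hi), ← mul_pow, neg_one_mul, neg_neg, one_pow, one_mul]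
  have hle : #{i ∈ range p | α i} ≤ #(range p) := card_filter_le _ _
  rw [card_range] at hle
  intro i hi
  have hi : i ∈ range p := mem_range.mpr (by omega)
  have h0 : 0 ∈ range p := mem_range.mpr hp.pos
  rcases Nat.eq_zero_or_pos #{i ∈ range p | α i} with hzero | hpos
  · rw [card_filter_eq_zero_iff] at hzero
    simp [hzero i hi, hzero 0 h0]
  · have hfull : #{i ∈ range p | α i} = #(range p) := by
      rw [card_range]; exact le_antisymm hle (Nat.le_of_dvd hpos hdvd)
    rw [card_filter_eq_iff] at hfull
    rw [hfull i hi, hfull 0 h0]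

/-- Since `∑_{i ≤ r} (-1)^i C(r+1, i) = (-1)^r`, the equation for `r + 1` expresses `α (r + 1)`
through the common value of `α 0, …, α r`. -/
lemma eq_of_altBinomSum_succ {α : ℕ → Bool} {r : ℕ} (hconst : ∀ i ≤ r, α i = α 0)
    (h : altBinomSum α (r + 1) = 0) : α (r + 1) = α 0 := by
  have hinit : ∑ i ∈ range (r + 1), (-1 : ℤ) ^ i * ((r + 1).choose i) * (if α i then 1 else 0)
      = (-1) ^ r * (if α 0 then 1 else 0) := by
    have hsum := Int.alternating_sum_range_choose_eq_choose (n := r) (m := r)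
    rw [Nat.choose_self, Nat.cast_one, mul_one] at hsum
    rw [← hsum, sum_mul]
    refine sum_congr rfl fun i hi => ?_
    rw [hconst i (Nat.lt_succ_iff.mp (mem_range.mp hi))]
  rw [altBinomSum, sum_range_succ, hinit, Nat.choose_self, Nat.cast_one] at h
  have hdiff : (-1 : ℤ) ^ r * ((if α 0 then 1 else 0) - (if α (r + 1) then 1 else 0)) = 0 := by
    linear_combination h
  have hind := (mul_eq_zero.mp hdiff).resolve_left (pow_ne_zero _ (by norm_num))
  revert hind
  cases α (r + 1) <;> cases α 0 <;> simp

lemma eq_of_altBinomSum_eq_zero {α : ℕ → Bool} {s m : ℕ} (hbase : ∀ i ≤ s, α i = α 0)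
    (h : ∀ r ∈ Icc (s + 1) m, altBinomSum α r = 0) : ∀ i ≤ m, α i = α 0 := by
  induction m with
  | zero => intro i hi; rw [Nat.le_zero.mp hi]
  | succ m ih =>
    by_cases hms : m + 1 ≤ s
    · exact fun i hi => hbase i (hi.trans hms)
    have hprev : ∀ i ≤ m, α i = α 0 :=
      ih fun r hr => h r (Icc_subset_Icc_right m.le_succ hr)
    have hnext := eq_of_altBinomSum_succ hprev (h (m + 1) (mem_Icc.mpr ⟨by omega, le_rfl⟩))
    intro i hi
    rcases Nat.lt_or_eq_of_le hi with hlt | rfl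
    exacts [hprev i (Nat.lt_succ_iff.mp hlt), hnext]

lemma largestPrimeLe_prime_and_le {n : ℕ} (hn : 2 ≤ n) :
    (largestPrimeLe n).Prime ∧ largestPrimeLe n ≤ n :=
  Nat.sSup_mem (s := {p | p.Prime ∧ p ≤ n}) ⟨2, Nat.prime_two, hn⟩ ⟨n, fun _ hp => hp.2⟩

lemma sub_largestPrimeLe_le_Ggap {k n : ℕ} (h3n : 3 ≤ n) (hnk : n ≤ k + 1) :
    n - largestPrimeLe n ≤ Ggap k :=
  le_sup (f := fun m => m - largestPrimeLe m) (mem_Icc.mpr ⟨h3n, hnk⟩)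

theorem stmt3 : ∀ k : ℕ, 2 ≤ k → gDef k ≤ Ggap k := by
  intro k _
  refine Nat.sInf_le fun m hm hmk α hsys => ?_
  set p := largestPrimeLe (m + 1)
  obtain ⟨hp, hpm⟩ := largestPrimeLe_prime_and_le (n := m + 1) (by omega)
  have hgap : m + 1 - p ≤ Ggap k := sub_largestPrimeLe_le_Ggap (by omega) (by omega)
  have hwindow : ∀ r, p - 1 ≤ r → r ≤ m → altBinomSum α r = 0 :=
    fun r hpr hrm => hsys r (mem_Icc.mpr ⟨by omega, hrm⟩)
  have hbase := eq_of_altBinomSum_pred_prime hp (hwindow (p - 1) le_rfl (by omega))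
  exact eq_of_altBinomSum_eq_zero hbase fun r hr => hwindow r (Nat.le_of_succ_le (mem_Icc.mp hr).1) (mem_Icc.mp hr).2
end

section
/- Let n, k ∈ ℕ with n ≥ 2k. A function f : C([n],k) → ℝ satisfies W^k(f) = 0 if and only if there exists a function h : C([n], k−1) → ℝ such that for all R ∈ C([n],k), f(R) = Σ_{S ⊂ R, |S| = k−1} h(S). -/
/-!
Write the pairs of the inner average as `a, b : Fin k → V`. The `k`-sets crossing every pair
`{aᵢ, bᵢ}` are the `2^k` transversals, so the inner average is `2^(-k)` times an alternating
"cross sum" of `f`, and `W^k(f) = 0` says that all cross sums vanish.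

Splitting off the pair `(x, y) = (a₀, b₀)` turns a cross sum of `f` into a cross sum of order
`k - 1` of `S ↦ f (S ∪ {x}) - f (S ∪ {y})`, on the ground set without `x` and `y`. This difference
maps `R ↦ ∑_{v ∈ R} h (R \ {v})` to a function of the same shape, which gives one direction by
induction on `k`. Conversely, split `f` orthogonally into such a function and a function `q`
orthogonal to all of them, i.e. harmonic: `∑_{z ∉ S} q (S ∪ {z}) = 0` for every `(k-1)`-set `S`.
The difference also preserves harmonicity, so by induction `q (S ∪ {x}) = q (S ∪ {y})` for all
`S, x, y`, and then harmonicity at `S` forces `q = 0` on `k`-sets.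
-/

open Finset

/-- Inner signed average over k-subsets R crossing each pair {a i, b i}:
E_R [ (-1)^{|R ∩ {b_1,...,b_r}|} f(R) ]. -/
noncomputable def signedAvg {V : Type*} [Fintype V] [DecidableEq V] (k : ℕ) {r : ℕ}
    (f : Finset V → ℝ) (a b : Fin r → V) : ℝ :=
  (∑ R ∈ (Finset.univ.powersetCard k).filter
      (fun R => ∀ i, (R ∩ {a i, b i}).card = 1),
      (-1 : ℝ) ^ (R ∩ Finset.image b Finset.univ).card * f R) /
  (((Finset.univ.powersetCard k).filter
      (fun R => ∀ i, (R ∩ {a i, b i}).card = 1)).card)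

/-- The level-r weight W^r(f) of a function on k-subsets: the square root of the
average, over all sequences (a_1,b_1,...,a_r,b_r) of 2r distinct vertices, of the
square of the inner signed average. -/
noncomputable def Wpow {V : Type*} [Fintype V] [DecidableEq V] (k r : ℕ)
    (f : Finset V → ℝ) : ℝ :=
  Real.sqrt
    ((∑ p ∈ (Finset.univ : Finset ((Fin r → V) × (Fin r → V))).filter
        (fun p => Function.Injective (Sum.elim p.1 p.2)),
        (signedAvg k f p.1 p.2) ^ 2) /
      (((Finset.univ : Finset ((Fin r → V) × (Fin r → V))).filter
        (fun p => Function.Injective (Sum.elim p.1 p.2))).card))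

namespace Slice

variable {V : Type*} {k : ℕ}

theorem sqrt_mean_sq_eq_zero_iff {ι : Type*} {s : Finset ι} (hs : s.Nonempty) (g : ι → ℝ) :
    √((∑ i ∈ s, g i ^ 2) / #s) = 0 ↔ ∀ i ∈ s, g i = 0 := by
  rw [Real.sqrt_eq_zero (by positivity), div_eq_zero_iff, or_iff_left (by simp [hs.ne_empty]),
    sum_eq_zero_iff_of_nonneg fun i _ => sq_nonneg _]
  simp

theorem exists_injective_sumElim [Fintype V] (hV : 2 * k ≤ Fintype.card V) :
    ∃ a b : Fin k → V, Function.Injective (Sum.elim a b) := by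
  obtain ⟨e⟩ := Function.Embedding.nonempty_of_card_le (α := Fin k ⊕ Fin k) (β := V)
    (by simpa [two_mul] using hV)
  exact ⟨e ∘ Sum.inl, e ∘ Sum.inr, by rw [Sum.elim_comp_inl_inr]; exact e.injective⟩

theorem sum_bool_pi_succ {M : Type*} [AddCommMonoid M] (F : (Fin (k + 1) → Bool) → M) :
    ∑ s, F s = ∑ s : Fin k → Bool, (F (Fin.cons true s) + F (Fin.cons false s)) := by
  rw [← (Fin.consEquiv fun _ => Bool).sum_comp, Fintype.sum_prod_type, Fintype.sum_bool,
    sum_add_distrib]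
  rfl

section

variable [DecidableEq V]

def transversal (a b : Fin k → V) (s : Fin k → Bool) : Finset V :=
  univ.image fun i => bif s i then b i else a i

theorem mem_transversal_right {a b : Fin k → V} (hab : Function.Injective (Sum.elim a b))
    (s : Fin k → Bool) (i : Fin k) : b i ∈ transversal a b s ↔ s i = true := by
  obtain ⟨ha, hb, hab⟩ := Sum.elim_injective.1 hab
  simp only [transversal, mem_image, mem_univ, true_and]
  constructor
  · rintro ⟨j, hj⟩
    cases h : s j <;> simp only [h, cond_true, cond_false] at hj
    · exact absurd hj (hab j i)
    · exact hb hj ▸ h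
  · exact fun h => ⟨i, by simp [h]⟩

theorem mem_transversal_left {a b : Fin k → V} (hab : Function.Injective (Sum.elim a b))
    (s : Fin k → Bool) (i : Fin k) : a i ∈ transversal a b s ↔ s i = false := by
  obtain ⟨ha, hb, hab⟩ := Sum.elim_injective.1 hab
  simp only [transversal, mem_image, mem_univ, true_and]
  constructor
  · rintro ⟨j, hj⟩
    cases h : s j <;> simp only [h, cond_true, cond_false] at hj
    · exact ha hj ▸ h
    · exact absurd hj.symm (hab i j)
  · exact fun h => ⟨i, by simp [h]⟩

theorem card_transversal {a b : Fin k → V} (hab : Function.Injective (Sum.elim a b))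
    (s : Fin k → Bool) : #(transversal a b s) = k := by
  have hchoice : (fun i => bif s i then b i else a i) =
      Sum.elim a b ∘ fun i => bif s i then Sum.inr i else Sum.inl i := by
    funext i; cases h : s i <;> simp [h]
  have hsel : Function.Injective fun i =>
      bif s i then Sum.inr i else (Sum.inl i : Fin k ⊕ Fin k) := by
    intro i j hij
    cases hi : s i <;> cases hj : s j <;> simp_all
  rw [transversal, card_image_of_injective _ (hchoice ▸ hab.comp hsel), card_univ,
    Fintype.card_fin]

theorem transversal_injective {a b : Fin k → V} (hab : Function.Injective (Sum.elim a b)) :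
    Function.Injective (transversal a b) := fun s t hst => funext fun i => by
  have h := mem_transversal_right hab s i
  rw [hst, mem_transversal_right hab t i] at h
  exact Bool.eq_iff_iff.2 h.symm

theorem transversal_inter_pair {a b : Fin k → V} (hab : Function.Injective (Sum.elim a b))
    (s : Fin k → Bool) (i : Fin k) :
    transversal a b s ∩ {a i, b i} = {bif s i then b i else a i} := by
  have hl := mem_transversal_left hab s i
  have hr := mem_transversal_right hab s i
  ext v
  simp only [mem_inter, mem_insert, mem_singleton]
  cases h : s i <;> simp only [h, cond_true, cond_false] at hl hr ⊢ <;> grind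

theorem transversal_inter_range {a b : Fin k → V} (hab : Function.Injective (Sum.elim a b))
    (s : Fin k → Bool) :
    transversal a b s ∩ univ.image b = ({i | s i} : Finset (Fin k)).image b := by
  ext v
  simp only [mem_inter, mem_image, mem_univ, true_and, mem_filter]
  constructor
  · rintro ⟨hv, i, rfl⟩
    exact ⟨i, (mem_transversal_right hab s i).1 hv, rfl⟩
  · rintro ⟨i, hi, rfl⟩
    exact ⟨(mem_transversal_right hab s i).2 hi, i, rfl⟩

theorem transversal_decide_mem_eq {a b : Fin k → V} (hab : Function.Injective (Sum.elim a b))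
    {R : Finset V} (hR : #R = k) (hcross : ∀ i, #(R ∩ {a i, b i}) = 1) :
    transversal a b (fun i => decide (b i ∈ R)) = R := by
  refine eq_of_subset_of_card_le ?_ (by rw [hR, card_transversal hab])
  intro v hv
  obtain ⟨i, -, rfl⟩ := mem_image.1 hv
  by_cases hbi : b i ∈ R
  · simp [hbi]
  · obtain ⟨w, hw⟩ := card_pos.1 (by rw [hcross i]; exact one_pos)
    simp only [mem_inter, mem_insert, mem_singleton] at hw
    simp only [hbi, decide_false, cond_false]
    grind

theorem crossingSets_eq_image [Fintype V] {a b : Fin k → V}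
    (hab : Function.Injective (Sum.elim a b)) :
    (univ.powersetCard k).filter (fun R => ∀ i, (R ∩ {a i, b i}).card = 1) =
      univ.image (transversal a b) := by
  ext R
  simp only [mem_filter, mem_powersetCard, subset_univ, true_and, mem_image, mem_univ]
  constructor
  · rintro ⟨hR, hcross⟩
    exact ⟨_, transversal_decide_mem_eq hab hR hcross⟩
  · rintro ⟨s, rfl⟩
    exact ⟨card_transversal hab s, fun i => by rw [transversal_inter_pair hab, card_singleton]⟩

def crossSum (f : Finset V → ℝ) (a b : Fin k → V) : ℝ :=
  ∑ s : Fin k → Bool, (-1) ^ #{i | s i} * f (transversal a b s)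

def IsCrossPair (U : Finset V) (a b : Fin k → V) : Prop :=
  Function.Injective (Sum.elim a b) ∧ ∀ i, a i ∈ U ∧ b i ∈ U

def CrossSumsVanish (U : Finset V) (k : ℕ) (f : Finset V → ℝ) : Prop :=
  ∀ a b : Fin k → V, IsCrossPair U a b → crossSum f a b = 0

theorem signedAvg_eq_crossSum_div [Fintype V] (f : Finset V → ℝ) {a b : Fin k → V}
    (hab : Function.Injective (Sum.elim a b)) :
    signedAvg k f a b = crossSum f a b / 2 ^ k := by
  rw [signedAvg, crossingSets_eq_image hab, sum_image (transversal_injective hab).injOn,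
    card_image_of_injective _ (transversal_injective hab), card_univ, Fintype.card_fun,
    Fintype.card_bool, Fintype.card_fin, crossSum]
  push_cast
  congr 1
  refine sum_congr rfl fun s _ => ?_
  rw [transversal_inter_range hab, card_image_of_injective _ (Sum.elim_injective.1 hab).2.1]

theorem Wpow_eq_zero_iff [Fintype V] (hV : 2 * k ≤ Fintype.card V) (f : Finset V → ℝ) :
    Wpow k k f = 0 ↔ CrossSumsVanish univ k f := by
  obtain ⟨a, b, hab⟩ := exists_injective_sumElim hV
  rw [Wpow, sqrt_mean_sq_eq_zero_iff ⟨(a, b), by simpa using hab⟩]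
  simp only [mem_filter, mem_univ, true_and, Prod.forall, CrossSumsVanish, IsCrossPair, and_self,
    implies_true, and_true]
  refine forall₃_congr fun a b hab => ?_
  rw [signedAvg_eq_crossSum_div f hab, div_eq_zero_iff, or_iff_left (by positivity)]

def pairDiff (x y : V) (f : Finset V → ℝ) (S : Finset V) : ℝ :=
  f (insert x S) - f (insert y S)

theorem transversal_cons (x y : V) (a b : Fin k → V) (c : Bool) (s : Fin k → Bool) :
    transversal (Fin.cons x a) (Fin.cons y b) (Fin.cons c s : Fin (k + 1) → Bool) =
      insert (bif c then y else x) (transversal a b s) := by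
  ext v
  simp [transversal, Fin.exists_fin_succ, eq_comm]

theorem crossSum_cons (f : Finset V → ℝ) (x y : V) (a b : Fin k → V) :
    crossSum f (Fin.cons x a) (Fin.cons y b) = crossSum (pairDiff x y f) a b := by
  rw [crossSum, sum_bool_pi_succ]
  refine sum_congr rfl fun s _ => ?_
  simp only [transversal_cons, Fin.card_filter_univ_succ, Fin.cons_zero, Fin.cons_succ, pairDiff,
    cond_true, cond_false, if_true, Bool.false_eq_true, if_false, pow_succ]
  ring

theorem isCrossPair_cons_iff {U : Finset V} {x y : V} {a b : Fin k → V} :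
    IsCrossPair U (Fin.cons x a) (Fin.cons y b) ↔
      x ∈ U ∧ y ∈ U ∧ x ≠ y ∧ IsCrossPair ((U.erase x).erase y) a b := by
  simp only [IsCrossPair, Sum.elim_injective, Fin.cons_injective_iff, Fin.forall_fin_succ,
    Fin.cons_zero, Fin.cons_succ, mem_erase, Set.mem_range, not_exists]
  grind

theorem transversal_subset {U : Finset V} {a b : Fin k → V} (hab : IsCrossPair U a b)
    (s : Fin k → Bool) : transversal a b s ⊆ U := by
  intro v hv
  obtain ⟨i, -, rfl⟩ := mem_image.1 hv
  cases s i
  exacts [(hab.2 i).1, (hab.2 i).2]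

theorem crossSum_congr {U : Finset V} {f f' : Finset V → ℝ} {a b : Fin k → V}
    (hab : IsCrossPair U a b) (h : ∀ T ⊆ U, #T = k → f T = f' T) :
    crossSum f a b = crossSum f' a b :=
  sum_congr rfl fun s _ => by
    rw [h _ (transversal_subset hab s) (card_transversal hab.1 s)]

theorem crossSumsVanish_congr {U : Finset V} {f f' : Finset V → ℝ}
    (h : ∀ T ⊆ U, #T = k → f T = f' T) :
    CrossSumsVanish U k f ↔ CrossSumsVanish U k f' :=
  forall₃_congr fun _ _ hab => by rw [crossSum_congr hab h]

theorem CrossSumsVanish.sub {U : Finset V} {f f' : Finset V → ℝ} (hf : CrossSumsVanish U k f)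
    (hf' : CrossSumsVanish U k f') : CrossSumsVanish U k (f - f') := by
  intro a b hab
  have hsub : crossSum (f - f') a b = crossSum f a b - crossSum f' a b := by
    simp only [crossSum, Pi.sub_apply, mul_sub, sum_sub_distrib]
  rw [hsub, hf a b hab, hf' a b hab, sub_zero]

theorem crossSum_zero (f : Finset V → ℝ) (a b : Fin 0 → V) : crossSum f a b = f ∅ := by
  simp [crossSum, transversal]

theorem CrossSumsVanish.pairDiff {U : Finset V} {q : Finset V → ℝ}
    (h : CrossSumsVanish U (k + 1) q) {x y : V} (hx : x ∈ U) (hy : y ∈ U) (hxy : x ≠ y) :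
    CrossSumsVanish ((U.erase x).erase y) k (pairDiff x y q) := fun a b hab => by
  rw [← crossSum_cons]
  exact h _ _ (isCrossPair_cons_iff.2 ⟨hx, hy, hxy, hab⟩)

def shadowSum (g : Finset V → ℝ) (R : Finset V) : ℝ :=
  ∑ x ∈ R, g (R.erase x)

theorem pairDiff_shadowSum (g : Finset V → ℝ) {x y : V} {T : Finset V} (hx : x ∉ T)
    (hy : y ∉ T) : pairDiff x y (shadowSum g) T = shadowSum (pairDiff x y g) T := by
  have hins : ∀ v ∉ T, shadowSum g (insert v T) = g T + ∑ z ∈ T, g (insert v (T.erase z)) :=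
    fun v hv => by
      rw [shadowSum, sum_insert hv, erase_insert hv]
      congr 1
      refine sum_congr rfl fun z hz => ?_
      rw [erase_insert_of_ne (ne_of_mem_of_not_mem hz hv).symm]
  rw [pairDiff, hins x hx, hins y hy, shadowSum, add_sub_add_left_eq_sub, ← sum_sub_distrib]
  rfl

theorem crossSumsVanish_shadowSum (U : Finset V) (g : Finset V → ℝ) :
    CrossSumsVanish U k (shadowSum g) := by
  induction k generalizing U g with
  | zero => intro a b _; simp [crossSum_zero, shadowSum]
  | succ k ih =>
    intro a b hab
    rw [← Fin.cons_self_tail a, ← Fin.cons_self_tail b] at hab ⊢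
    obtain ⟨-, -, -, hab'⟩ := isCrossPair_cons_iff.1 hab
    rw [crossSum_cons, crossSum_congr hab' (f' := shadowSum (pairDiff (a 0) (b 0) g))]
    · exact ih _ _ _ _ hab'
    · intro T hT _
      exact pairDiff_shadowSum g (fun h => by simpa using hT h) (fun h => by simpa using hT h)

theorem powersetCard_card_sub_one_eq_image {R : Finset V} (hR : R.Nonempty) :
    R.powersetCard (#R - 1) = R.image R.erase := by
  ext S
  simp only [mem_powersetCard, mem_image]
  constructor
  · rintro ⟨hSR, hS⟩
    obtain ⟨x, hxS, rfl⟩ := exists_eq_insert_iff.2 ⟨hSR, by have := hR.card_pos; omega⟩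
    exact ⟨x, mem_insert_self x S, erase_insert hxS⟩
  · rintro ⟨x, hx, rfl⟩
    exact ⟨erase_subset x R, card_erase_of_mem hx⟩

theorem sum_powersetCard_card_sub_one {R : Finset V} (hR : R.Nonempty) (g : Finset V → ℝ) :
    ∑ S ∈ R.powersetCard (#R - 1), g S = shadowSum g R := by
  rw [powersetCard_card_sub_one_eq_image hR, sum_image (erase_injOn R), shadowSum]

theorem crossSumsVanish_of_eq_sum_powersetCard (hk : 1 ≤ k) {U : Finset V}
    {f h : Finset V → ℝ} (hf : ∀ R ⊆ U, #R = k → f R = ∑ S ∈ R.powersetCard (k - 1), h S) :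
    CrossSumsVanish U k f :=
  (crossSumsVanish_congr fun R hRU hR => by
    rw [hf R hRU hR, ← hR, sum_powersetCard_card_sub_one (card_pos.1 (by omega))]).2
    (crossSumsVanish_shadowSum U h)

def IsHarmonic (U : Finset V) (k : ℕ) (q : Finset V → ℝ) : Prop :=
  ∀ S ⊆ U, #S + 1 = k → ∑ z ∈ U \ S, q (insert z S) = 0

theorem IsHarmonic.pairDiff {U : Finset V} {q : Finset V → ℝ} (h : IsHarmonic U (k + 1) q)
    {x y : V} (hx : x ∈ U) (hy : y ∈ U) (hxy : x ≠ y) :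
    IsHarmonic ((U.erase x).erase y) k (pairDiff x y q) := by
  intro S hS hcard
  have hxS : x ∉ S := fun h => by simpa using hS h
  have hyS : y ∉ S := fun h => by simpa using hS h
  have hxsum := h (insert x S) (by grind) (by rw [card_insert_of_notMem hxS, hcard])
  have hysum := h (insert y S) (by grind) (by rw [card_insert_of_notMem hyS, hcard])
  have hUx : U \ insert x S = insert y ((U.erase x).erase y \ S) := by grind
  have hUy : U \ insert y S = insert x ((U.erase x).erase y \ S) := by grind
  rw [hUx, sum_insert (by simp)] at hxsum
  rw [hUy, sum_insert (by simp), insert_comm] at hysum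
  have hcomm : ∀ v, ∑ z ∈ (U.erase x).erase y \ S, q (insert z (insert v S)) =
      ∑ z ∈ (U.erase x).erase y \ S, q (insert v (insert z S)) :=
    fun v => sum_congr rfl fun z _ => by rw [insert_comm]
  rw [hcomm] at hxsum hysum
  simp only [Slice.pairDiff, sum_sub_distrib]
  linarith

theorem eq_zero_of_isHarmonic_of_crossSumsVanish {U : Finset V} {q : Finset V → ℝ}
    (hU : 2 * k ≤ #U) (hharm : IsHarmonic U k q) (hq : CrossSumsVanish U k q) {R : Finset V}
    (hRU : R ⊆ U) (hR : #R = k) : q R = 0 := by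
  induction k generalizing U q R with
  | zero =>
    rw [card_eq_zero.1 hR, ← crossSum_zero q Fin.elim0 Fin.elim0]
    exact hq _ _ ⟨fun i => i.elim (fun i => i.elim0) (fun i => i.elim0), fun i => i.elim0⟩
  | succ k ih =>
    obtain ⟨x, hxR⟩ := card_pos.1 (by omega : 0 < #R)
    set S := R.erase x
    have hSU : S ⊆ U := (erase_subset x R).trans hRU
    have hswap : ∀ z ∈ U \ S, q (insert z S) = q R := by
      intro z hz
      obtain ⟨hzU, hzS⟩ := mem_sdiff.1 hz
      by_cases hzx : z = x
      · rw [hzx, insert_erase hxR]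
      have hzR : z ∉ R := fun h => hzS (mem_erase.2 ⟨hzx, h⟩)
      have hdiff := ih (U := (U.erase x).erase z) (q := Slice.pairDiff x z q) (R := S)
        (by rw [card_erase_of_mem (mem_erase.2 ⟨hzx, hzU⟩), card_erase_of_mem (hRU hxR)]
            omega)
        (hharm.pairDiff (hRU hxR) hzU (Ne.symm hzx)) (hq.pairDiff (hRU hxR) hzU (Ne.symm hzx))
        (fun v hv => by grind) (by rw [card_erase_of_mem hxR, hR]; rfl)
      rw [Slice.pairDiff, insert_erase hxR, sub_eq_zero] at hdiff
      exact hdiff.symm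
    have hsum := hharm S hSU (by rw [card_erase_of_mem hxR, hR]; rfl)
    rw [sum_congr rfl hswap, sum_const, nsmul_eq_mul] at hsum
    have hcard : 0 < #(U \ S) := by
      rw [card_sdiff_of_subset hSU, card_erase_of_mem hxR, hR]; omega
    exact (mul_eq_zero.1 hsum).resolve_left (by positivity)

end

variable (V) in
noncomputable def shadowMap [Fintype V] (k : ℕ) :
    (Finset V → ℝ) →ₗ[ℝ] EuclideanSpace ℝ (Finset V) where
  toFun g := WithLp.toLp 2 fun R => if #R = k then ∑ S ∈ R.powersetCard (k - 1), g S else 0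
  map_add' g g' := by
    ext R
    by_cases hR : #R = k <;> simp [hR, sum_add_distrib]
  map_smul' c g := by
    ext R
    by_cases hR : #R = k <;> simp [hR, mul_sum]

theorem shadowMap_apply [Fintype V] (g : Finset V → ℝ) (R : Finset V) :
    shadowMap V k g R = if #R = k then ∑ S ∈ R.powersetCard (k - 1), g S else 0 := rfl

section

variable [DecidableEq V] [Fintype V]

theorem sum_supersets_card_succ (S : Finset V) (q : Finset V → ℝ) :
    ∑ T with #T = #S + 1 ∧ S ⊆ T, q T = ∑ z ∈ univ \ S, q (insert z S) := by
  have himage : ({T | #T = #S + 1 ∧ S ⊆ T} : Finset (Finset V)) =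
      (univ \ S).image (insert · S) := by
    ext T
    simp only [mem_filter, mem_univ, true_and, mem_image, mem_sdiff]
    rw [exists_eq_insert_iff, and_comm, eq_comm]
  rw [himage, sum_image fun y hy z _ h => (insert_inj (mem_sdiff.1 hy).2).1 h]

theorem isHarmonic_of_mem_orthogonal {e : EuclideanSpace ℝ (Finset V)}
    (he : e ∈ (LinearMap.range (shadowMap V k))ᗮ) : IsHarmonic univ k (e ·) := by
  rintro S - hS
  have hind : ∀ R, shadowMap V k (Pi.single S 1) R = if #R = #S + 1 ∧ S ⊆ R then 1 else 0 := by
    intro R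
    rw [shadowMap_apply, sum_pi_single', ← hS]
    by_cases hR : #R = #S + 1 <;> simp [hR, mem_powersetCard]
  have hinner :=
    (Submodule.mem_orthogonal _ e).1 he _ (LinearMap.mem_range_self _ (Pi.single S 1))
  rw [PiLp.inner_apply] at hinner
  simp only [hind, RCLike.inner_apply, conj_trivial, mul_ite, mul_one, mul_zero] at hinner
  rw [← sum_filter, sum_supersets_card_succ] at hinner
  exact hinner

theorem exists_eq_sum_powersetCard_of_crossSumsVanish (hk : 1 ≤ k)
    (hV : 2 * k ≤ Fintype.card V) {f : Finset V → ℝ} (hf : CrossSumsVanish univ k f) :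
    ∃ h : Finset V → ℝ, ∀ R ∈ univ.powersetCard k, f R = ∑ S ∈ R.powersetCard (k - 1), h S := by
  obtain ⟨p, hp, e, he, hfpe⟩ :=
    (LinearMap.range (shadowMap V k)).exists_add_mem_mem_orthogonal
      (WithLp.toLp 2 fun R => if #R = k then f R else 0)
  obtain ⟨g, rfl⟩ := LinearMap.mem_range.1 hp
  have hcoord : ∀ R, #R = k → f R = shadowMap V k g R + e R := fun R hR => by
    simpa [hR] using congrArg (· R) hfpe
  have hshadow : CrossSumsVanish univ k (shadowMap V k g ·) :=
    crossSumsVanish_of_eq_sum_powersetCard hk fun R _ hR => by rw [shadowMap_apply, if_pos hR]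
  have he0 : CrossSumsVanish univ k (e ·) :=
    (crossSumsVanish_congr fun T _ hT => by simp [hcoord T hT]).1 (hf.sub hshadow)
  refine ⟨g, fun R hR => ?_⟩
  obtain ⟨-, hR⟩ := mem_powersetCard.1 hR
  rw [hcoord R hR, eq_zero_of_isHarmonic_of_crossSumsVanish (by simpa using hV)
    (isHarmonic_of_mem_orthogonal he) he0 (subset_univ R) hR, add_zero, shadowMap_apply,
    if_pos hR]

theorem crossSumsVanish_iff_exists_eq_sum_powersetCard (hk : 1 ≤ k)
    (hV : 2 * k ≤ Fintype.card V) (f : Finset V → ℝ) :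
    CrossSumsVanish univ k f ↔
      ∃ h : Finset V → ℝ, ∀ R ∈ univ.powersetCard k, f R = ∑ S ∈ R.powersetCard (k - 1), h S :=
  ⟨exists_eq_sum_powersetCard_of_crossSumsVanish hk hV, fun ⟨_, hh⟩ =>
    crossSumsVanish_of_eq_sum_powersetCard hk fun R _ hR =>
      hh R (mem_powersetCard.2 ⟨subset_univ R, hR⟩)⟩

end

end Slice

theorem stmt9 (n k : ℕ) (hk : 1 ≤ k) (hn : 2 * k ≤ n)
    (f : Finset (Fin n) → ℝ) :
    Wpow k k f = 0 ↔
    ∃ h : Finset (Fin n) → ℝ,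
      ∀ R ∈ (Finset.univ : Finset (Fin n)).powersetCard k,
        f R = ∑ S ∈ R.powersetCard (k - 1), h S := by
  have hV : 2 * k ≤ Fintype.card (Fin n) := by simpa using hn
  rw [Slice.Wpow_eq_zero_iff hV, Slice.crossSumsVanish_iff_exists_eq_sum_powersetCard hk hV]
end

section
/- Let V be a finite set of size n and let r, s ∈ ℕ with n ≥ r ≥ s. Let M^r_s be the real matrix with rows indexed by C(V,r) and columns indexed by C(V,s), whose entry at position (R,S) equals 1 if S ⊆ R and 0 otherwise. Then rank(M^r_s) = min{ C(n,r), C(n,s) }. -/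
/-! If `r + s ≤ n`, the columns of `M^r_s` are linearly independent. A kernel vector `c` has
vanishing sums over the `s`-subsets of every `r`-set, hence, by double counting over the
`ρ`-subsets of a `(ρ + 1)`-set, over the `s`-subsets of every set of size at least `r`. In
particular the sums over the `s`-sets avoiding `T` vanish for every `T ⊆ S₀`, and
inclusion–exclusion over `T ⊆ S₀` isolates `c S₀`. If `r + s > n`, complementation identifies
the transpose of `M^r_s` with `M^(n-s)_(n-r)`, which falls under the first case. In both cases
the rank is the smaller binomial coefficient because `k ↦ C(n, k)` increases up to `n / 2`. -/

open Finset

namespace Nat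

theorem choose_le_choose_of_le_of_le_half {n a b : ℕ} (hab : a ≤ b) (hb : b ≤ n / 2) :
    n.choose a ≤ n.choose b := by
  induction b, hab using Nat.le_induction with
  | base => rfl
  | succ b _ ih => exact (ih (by omega)).trans (choose_le_succ_of_lt_half_left (by omega))

theorem choose_le_choose_of_le_of_add_le {n a b : ℕ} (hab : a ≤ b) (h : a + b ≤ n) :
    n.choose a ≤ n.choose b := by
  rcases le_or_gt b (n / 2) with hb | hb
  · exact choose_le_choose_of_le_of_le_half hab hb
  · rw [← choose_symm (by omega : b ≤ n)]
    exact choose_le_choose_of_le_of_le_half (by omega) (by omega)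

end Nat

namespace Finset

variable {α M : Type*} [DecidableEq α]

theorem sum_sum_powersetCard_erase [AddCommMonoid M] (R : Finset α) (s : ℕ)
    (c : Finset α → M) :
    ∑ x ∈ R, ∑ S ∈ (R.erase x).powersetCard s, c S = (#R - s) • ∑ S ∈ R.powersetCard s, c S := by
  have herase : ∀ x, (R.erase x).powersetCard s = {S ∈ R.powersetCard s | x ∉ S} := by
    intro x
    ext S
    simp only [mem_powersetCard, mem_filter, subset_erase]
    tauto
  simp_rw [herase, sum_filter]
  rw [sum_comm, smul_sum]
  refine sum_congr rfl fun S hS => ?_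
  obtain ⟨hSR, rfl⟩ := mem_powersetCard.1 hS
  rw [← sum_filter, sum_const, filter_notMem_eq_sdiff, card_sdiff_of_subset hSR]

variable [AddCommGroup M]

theorem sum_powersetCard_eq_zero_of_le [IsAddTorsionFree M] {r s : ℕ} (hs : s ≤ r)
    (c : Finset α → M) (h : ∀ R : Finset α, #R = r → ∑ S ∈ R.powersetCard s, c S = 0)
    {R : Finset α} (hR : r ≤ #R) : ∑ S ∈ R.powersetCard s, c S = 0 := by
  obtain ⟨k, hk⟩ := Nat.exists_eq_add_of_le hR
  induction k generalizing R with
  | zero => exact h R hk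
  | succ k ih =>
    rw [← nsmul_eq_zero_iff_right (by omega : #R - s ≠ 0), ← sum_sum_powersetCard_erase]
    refine sum_eq_zero fun x hx => ?_
    have hcard : #(R.erase x) = r + k := by rw [card_erase_of_mem hx]; omega
    exact ih (by omega) hcard

theorem sum_powerset_zsmul_sum_disjoint (𝒮 : Finset (Finset α)) (c : Finset α → M)
    (A : Finset α) :
    ∑ T ∈ A.powerset, (-1 : ℤ) ^ #T • ∑ S ∈ 𝒮 with Disjoint S T, c S =
      ∑ S ∈ 𝒮 with A ⊆ S, c S := by
  simp_rw [smul_sum, sum_filter]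
  rw [sum_comm]
  refine sum_congr rfl fun S _ => ?_
  have hpow : {T ∈ A.powerset | Disjoint S T} = (A \ S).powerset := by
    ext T
    simp only [mem_filter, mem_powerset, subset_sdiff, disjoint_comm]
  rw [← sum_filter, hpow, ← sum_smul, sum_powerset_neg_one_pow_card]
  simp only [sdiff_eq_empty_iff_subset]
  split_ifs <;> simp

theorem eq_zero_of_forall_sum_powersetCard_eq_zero [Fintype α] [IsAddTorsionFree M] {r s : ℕ}
    (hs : s ≤ r) (hrs : r + s ≤ Fintype.card α) (c : Finset α → M)
    (h : ∀ R : Finset α, #R = r → ∑ S ∈ R.powersetCard s, c S = 0)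
    {S₀ : Finset α} (hS₀ : #S₀ = s) : c S₀ = 0 := by
  have hdisjoint :
      ∀ T ⊆ S₀, ∑ S ∈ (univ : Finset α).powersetCard s with Disjoint S T, c S = 0 := by
    intro T hT
    have hcompl : {S ∈ (univ : Finset α).powersetCard s | Disjoint S T} = Tᶜ.powersetCard s := by
      ext S
      simp [subset_compl_iff_disjoint_right, and_comm]
    rw [hcompl]
    refine sum_powersetCard_eq_zero_of_le hs c h ?_
    rw [card_compl]
    have := card_le_card hT
    omega
  have hsupset : {S ∈ (univ : Finset α).powersetCard s | S₀ ⊆ S} = {S₀} := by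
    ext S
    simp only [mem_filter, mem_powersetCard_univ, mem_singleton]
    constructor
    · rintro ⟨hS, hsub⟩
      exact (eq_of_subset_of_card_le hsub (by omega)).symm
    · rintro rfl
      exact ⟨hS₀, subset_rfl⟩
  calc c S₀ = ∑ S ∈ (univ : Finset α).powersetCard s with S₀ ⊆ S, c S := by
        rw [hsupset, sum_singleton]
    _ = ∑ T ∈ S₀.powerset, (-1 : ℤ) ^ #T • ∑ S ∈ univ.powersetCard s with Disjoint S T, c S :=
      (sum_powerset_zsmul_sum_disjoint _ c S₀).symm
    _ = 0 := sum_eq_zero fun T hT => by rw [hdisjoint T (mem_powerset.1 hT), smul_zero]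

end Finset

section InclusionMatrix

open Matrix

variable (K V : Type*) [Fintype V] [DecidableEq V]

def inclusionMatrix [Zero K] [One K] (r s : ℕ) :
    Matrix {R : Finset V // R ∈ (univ : Finset V).powersetCard r}
      {S : Finset V // S ∈ (univ : Finset V).powersetCard s} K :=
  Matrix.of fun R S => if S.1 ⊆ R.1 then 1 else 0

def powersetCardComplEquiv {m n : ℕ} (h : m + n = Fintype.card V) :
    {R : Finset V // R ∈ (univ : Finset V).powersetCard n} ≃
      {R : Finset V // R ∈ (univ : Finset V).powersetCard m} :=
  let e : ∀ k, {R : Finset V // R ∈ (univ : Finset V).powersetCard k} ≃ Set.powersetCard V k :=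
    fun _ => Equiv.subtypeEquivRight fun _ =>
      mem_powersetCard_univ.trans Set.powersetCard.mem_iff.symm
  (e n).trans ((Set.powersetCard.compl h).trans (e m).symm)

variable {K V} [Field K] {r s : ℕ}

theorem inclusionMatrix_mulVec_apply
    (v : {S : Finset V // S ∈ (univ : Finset V).powersetCard s} → K)
    (R : {R : Finset V // R ∈ (univ : Finset V).powersetCard r}) :
    (inclusionMatrix K V r s *ᵥ v) R =
      ∑ S ∈ R.1.powersetCard s, Function.extend Subtype.val v 0 S := by
  have hsub : R.1.powersetCard s = {S ∈ (univ : Finset V).powersetCard s | S ⊆ R.1} := by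
    ext S
    simp only [mem_powersetCard, mem_filter, subset_univ, true_and]
    tauto
  rw [hsub, sum_filter, sum_subtype _ (fun _ => Iff.rfl)]
  refine sum_congr rfl fun S _ => ?_
  rw [Subtype.val_injective.extend_apply]
  simp [inclusionMatrix]

theorem inclusionMatrix_mulVecLin_injective [CharZero K] (hs : s ≤ r)
    (hrs : r + s ≤ Fintype.card V) : Function.Injective (inclusionMatrix K V r s).mulVecLin := by
  rw [← LinearMap.ker_eq_bot, LinearMap.ker_eq_bot']
  intro v hv
  funext S
  have hsum : ∀ R : Finset V, #R = r →
      ∑ S ∈ R.powersetCard s, Function.extend Subtype.val v 0 S = 0 := fun R hR => by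
    rw [← inclusionMatrix_mulVec_apply v ⟨R, mem_powersetCard_univ.2 hR⟩]
    exact congrFun hv _
  rw [← Subtype.val_injective.extend_apply v 0 S]
  exact eq_zero_of_forall_sum_powersetCard_eq_zero hs hrs _ hsum (mem_powersetCard_univ.1 S.2)

theorem rank_inclusionMatrix_of_add_le [CharZero K] (hs : s ≤ r)
    (hrs : r + s ≤ Fintype.card V) :
    (inclusionMatrix K V r s).rank = (Fintype.card V).choose s := by
  rw [Matrix.rank, LinearMap.finrank_range_of_inj (inclusionMatrix_mulVecLin_injective hs hrs),
    Module.finrank_fintype_fun_eq_card, Fintype.card_coe, card_powersetCard, card_univ]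

theorem inclusionMatrix_transpose_submatrix_compl (hs : s ≤ Fintype.card V)
    (hr : r ≤ Fintype.card V) :
    (inclusionMatrix K V r s)ᵀ.submatrix (powersetCardComplEquiv V (Nat.add_sub_cancel' hs))
      (powersetCardComplEquiv V (Nat.add_sub_cancel' hr)) =
      inclusionMatrix K V (Fintype.card V - s) (Fintype.card V - r) := by
  ext A B
  simp [inclusionMatrix, powersetCardComplEquiv]

theorem rank_inclusionMatrix_eq_rank_compl (hs : s ≤ Fintype.card V) (hr : r ≤ Fintype.card V) :
    (inclusionMatrix K V r s).rank =
      (inclusionMatrix K V (Fintype.card V - s) (Fintype.card V - r)).rank := by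
  rw [← inclusionMatrix_transpose_submatrix_compl hs hr, Matrix.rank_submatrix,
    Matrix.rank_transpose]

end InclusionMatrix

theorem stmt10 {V : Type*} [Fintype V] [DecidableEq V] (n r s : ℕ)
    (hV : Fintype.card V = n) (hs : s ≤ r) (hr : r ≤ n) :
    (Matrix.of (fun (R : {R : Finset V // R ∈ (Finset.univ : Finset V).powersetCard r})
        (S : {S : Finset V // S ∈ (Finset.univ : Finset V).powersetCard s}) =>
        if S.1 ⊆ R.1 then (1 : ℝ) else 0)).rank =
      min (n.choose r) (n.choose s) := by
  subst hV
  change (inclusionMatrix ℝ V r s).rank = _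
  rcases le_or_gt (r + s) (Fintype.card V) with hrs | hrs
  · rw [rank_inclusionMatrix_of_add_le hs hrs,
      min_eq_right (Nat.choose_le_choose_of_le_of_add_le hs (by omega))]
  · have hle := Nat.choose_le_choose_of_le_of_add_le (n := Fintype.card V)
      (by omega : Fintype.card V - r ≤ Fintype.card V - s) (by omega)
    rw [Nat.choose_symm hr, Nat.choose_symm (hs.trans hr)] at hle
    rw [rank_inclusionMatrix_eq_rank_compl (hs.trans hr) hr,
      rank_inclusionMatrix_of_add_le (by omega) (by omega), Nat.choose_symm hr, min_eq_left hle]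
end

section
/- Let n, k ∈ ℕ with n ≥ 2k. Then |B_{n,k}| = C(n,k) − C(n,k−1), where B_{n,k} is the set of k-permutations B = (b₁,…,b_k) of [n] for which there exists a k-permutation A = (a₁,…,a_k) of [n] disjoint from B with b₁ < b₂ < ⋯ < b_k and aᵢ < bᵢ for every i ∈ [k]. -/
/-!
A sequence `b` lies in `B_{n,k}` exactly when it is increasing with `b_i ≥ 2i`. Necessity: the
`2i` distinct entries `a_1, …, a_i, b_1, …, b_i` all lie in `[1, b_i]`. Sufficiency: let `A` list
the `k` smallest elements outside `B` (there are `n - k ≥ k` of them); since `[1, b_i)` holds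
`b_i - i ≥ i` elements outside `B`, the `i`-th of them is below `b_i`.
Sorting such sequences by whether `b_k = n` gives Pascal's recursion, valid while `n > 2k`; at
`n = 2k - 1` there are none, and the ballot numbers `C(n,k) - C(n,k-1)` obey the same rules.
-/

open Finset

/-- A ≺ B for k-permutations of Fin n: B is strictly increasing, a_i < b_i for all i,
and all 2k entries are distinct (in particular A is a k-permutation disjoint from B). -/
def precRel {n k : ℕ} (a b : Fin k → Fin n) : Prop :=
  StrictMono b ∧ (∀ i, a i < b i) ∧ Function.Injective (Sum.elim a b)

/-- The paper's condition `b_i ≥ 2i`, shifted to `0`-based indices and values. -/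
def IsBallot {n k : ℕ} (b : Fin k → Fin n) : Prop :=
  StrictMono b ∧ ∀ i : Fin k, 2 * (i : ℕ) + 1 ≤ b i

theorem precRel.two_mul_add_one_le {n k : ℕ} {a b : Fin k → Fin n} (h : precRel a b)
    (i : Fin k) : 2 * (i : ℕ) + 1 ≤ b i := by
  obtain ⟨hb, hab, hinj⟩ := h
  let e : Fin (i + 1) → Fin k := Fin.castLE i.isLt
  have hle : ∀ j, b (e j) ≤ b i := fun j => hb.monotone (Fin.le_def.2 (by simp [e]; omega))
  have hcard := card_le_card_of_injOn (s := univ) (t := Iic (b i)) (Sum.elim a b ∘ Sum.map e e)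
    (by rintro (j | j) - <;> simp [(hab _).le.trans, hle])
    (hinj.comp ((Fin.castLE_injective _).sumMap (Fin.castLE_injective _))).injOn
  simp only [card_univ, Fintype.card_sum, Fintype.card_fin, Fin.card_Iic] at hcard
  omega

theorem Finset.orderEmbOfFin_lt_of_lt_card_filter {α : Type*} [LinearOrder α] (s : Finset α)
    {m : ℕ} (h : s.card = m) {i : Fin m} {x : α} (hi : (i : ℕ) < #{y ∈ s | y < x}) :
    s.orderEmbOfFin h i < x := by
  by_contra! hx
  have hsub : {y ∈ s | y < x} ⊆ (Iio i).image (s.orderEmbOfFin h) := by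
    intro y hy
    rw [mem_filter] at hy
    obtain ⟨j, rfl⟩ : y ∈ Set.range (s.orderEmbOfFin h) := by simpa using hy.1
    exact mem_image_of_mem _ (mem_Iio.2 ((s.orderEmbOfFin h).lt_iff_lt.1 (hy.2.trans_le hx)))
  have := (card_le_card hsub).trans card_image_le
  simp only [Fin.card_Iio] at this
  omega

theorem StrictMono.card_filter_image_lt {n k : ℕ} {b : Fin k → Fin n} (hb : StrictMono b)
    (i : Fin k) : #{y ∈ univ.image b | y < b i} = i := by
  rw [filter_image, card_image_of_injective _ hb.injective]
  simp only [hb.lt_iff_lt, filter_gt_eq_Iio, Fin.card_Iio]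

theorem exists_precRel_of_isBallot {n k : ℕ} (hn : 2 * k ≤ n) {b : Fin k → Fin n}
    (hb : IsBallot b) : ∃ a, precRel a b := by
  classical
  set s := (univ.image b)ᶜ
  have hs : s.card = n - k := by
    simp [s, card_compl, card_image_of_injective _ hb.1.injective]
  let c := s.orderEmbOfFin hs
  let a : Fin k → Fin n := fun i => c (Fin.castLE (by omega) i)
  have ha_lt : ∀ i, a i < b i := by
    intro i
    apply orderEmbOfFin_lt_of_lt_card_filter
    have hcompl : {y ∈ s | y < b i} = Iio (b i) \ univ.image b := by
      ext y
      simp only [s, mem_filter, mem_compl, mem_sdiff, mem_Iio]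
      tauto
    have hinter : univ.image b ∩ Iio (b i) = {y ∈ univ.image b | y < b i} := by
      ext y
      simp
    rw [hcompl, card_sdiff, hinter, hb.1.card_filter_image_lt, Fin.card_Iio]
    have := hb.2 i
    simp only [Fin.val_castLE]
    omega
  refine ⟨a, hb.1, ha_lt, (c.injective.comp (Fin.castLE_injective _)).sumElim hb.1.injective ?_⟩
  intro i j hij
  exact mem_compl.1 (orderEmbOfFin_mem s hs _) (hij ▸ mem_image_of_mem b (mem_univ j))

theorem isBallot_iff_exists_precRel {n k : ℕ} (hn : 2 * k ≤ n) (b : Fin k → Fin n) :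
    IsBallot b ↔ ∃ a, precRel a b :=
  ⟨exists_precRel_of_isBallot hn, fun ⟨_, h⟩ => ⟨h.1, h.two_mul_add_one_le⟩⟩

theorem isBallot_castSucc_comp_iff {n k : ℕ} {b : Fin k → Fin n} :
    IsBallot (Fin.castSucc ∘ b) ↔ IsBallot b := by
  simp [IsBallot, StrictMono, Fin.castSucc_lt_castSucc_iff]

theorem isBallot_snoc_last_iff {n k : ℕ} {b : Fin k → Fin n} :
    IsBallot (Fin.snoc (Fin.castSucc ∘ b) (Fin.last n) : Fin (k + 1) → Fin (n + 1)) ↔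
      IsBallot b ∧ 2 * k + 1 ≤ n := by
  simp [IsBallot, StrictMono, Fin.forall_fin_succ', Fin.castSucc_lt_castSucc_iff, and_assoc,
    not_lt.2 (Fin.le_last _)]

theorem Fin.exists_castSucc_comp_eq {n k : ℕ} {b : Fin k → Fin (n + 1)}
    (h : ∀ i, b i ≠ Fin.last n) : ∃ c : Fin k → Fin n, Fin.castSucc ∘ c = b :=
  ⟨fun i => (b i).castPred (h i), funext fun _ => Fin.castSucc_castPred _ _⟩

noncomputable def ballotCount (n k : ℕ) : ℕ :=
  Nat.card {b : Fin k → Fin n // IsBallot b}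

theorem ballotCount_zero_right (n : ℕ) : ballotCount n 0 = 1 :=
  Nat.card_eq_one_iff_exists.2
    ⟨⟨finZeroElim, Subsingleton.strictMono _, finZeroElim⟩,
      fun _ => Subtype.ext (Subsingleton.elim _ _)⟩

theorem ballotCount_succ_eq_zero {n k : ℕ} (h : n ≤ 2 * k + 1) : ballotCount n (k + 1) = 0 := by
  refine Nat.card_eq_zero.2 (.inl ⟨fun ⟨b, hb⟩ => ?_⟩)
  have := hb.2 (Fin.last k)
  have := (b (Fin.last k)).isLt
  simp only [Fin.val_last] at *
  omega

theorem ballotCount_succ_succ {n k : ℕ} (h : 2 * k + 1 ≤ n) :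
    ballotCount (n + 1) (k + 1) = ballotCount n (k + 1) + ballotCount n k := by
  let f : {b : Fin (k + 1) → Fin n // IsBallot b} ⊕ {b : Fin k → Fin n // IsBallot b} →
      {b : Fin (k + 1) → Fin (n + 1) // IsBallot b} :=
    Sum.elim (fun b => ⟨Fin.castSucc ∘ b, isBallot_castSucc_comp_iff.2 b.2⟩)
      (fun b => ⟨Fin.snoc (Fin.castSucc ∘ b) (Fin.last n), isBallot_snoc_last_iff.2 ⟨b.2, h⟩⟩)
  have hf : f.Bijective := by
    refine ⟨Function.Injective.sumElim ?_ ?_ ?_, ?_⟩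
    · intro b c hbc
      exact Subtype.ext ((Fin.castSucc_injective n).comp_left (congrArg Subtype.val hbc))
    · intro b c hbc
      have := congrArg (Fin.init ∘ Subtype.val) hbc
      exact Subtype.ext ((Fin.castSucc_injective n).comp_left (by simpa [Fin.init_snoc] using this))
    · intro b c hbc
      have := congrFun (congrArg Subtype.val hbc) (Fin.last k)
      simp only [Function.comp_apply, Fin.snoc_last] at this
      exact Fin.castSucc_ne_last _ this
    · rintro ⟨b, hb⟩
      by_cases hlast : b (Fin.last k) = Fin.last n
      · have hne : ∀ i, Fin.init b i ≠ Fin.last n := fun i =>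
          (hlast ▸ hb.1 (Fin.castSucc_lt_last i)).ne
        obtain ⟨c, hc⟩ := Fin.exists_castSucc_comp_eq hne
        have hbc : Fin.snoc (Fin.castSucc ∘ c) (Fin.last n) = b := by
          rw [hc, ← hlast, Fin.snoc_init_self]
        exact ⟨.inr ⟨c, (isBallot_snoc_last_iff.1 (hbc ▸ hb)).1⟩, Subtype.ext hbc⟩
      · have hne : ∀ i, b i ≠ Fin.last n := fun i =>
          ((hb.1.monotone (Fin.le_last i)).trans_lt (Fin.lt_last_iff_ne_last.2 hlast)).ne
        obtain ⟨c, rfl⟩ := Fin.exists_castSucc_comp_eq hne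
        exact ⟨.inl ⟨c, isBallot_castSucc_comp_iff.1 hb⟩, rfl⟩
  unfold ballotCount
  rw [← Nat.card_sum, Nat.card_eq_of_bijective f hf]

theorem ballotCount_add_choose {n k : ℕ} (h : 2 * k + 1 ≤ n) :
    ballotCount n (k + 1) + n.choose k = n.choose (k + 1) := by
  induction n generalizing k with
  | zero => omega
  | succ n ih =>
    rcases h.eq_or_lt with hn | hn
    · rw [ballotCount_succ_eq_zero hn.ge, ← hn, Nat.choose_symm_half, zero_add]
    have hk := ih (k := k) (by omega)
    rw [ballotCount_succ_succ (by omega), Nat.choose_succ_succ']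
    cases k with
    | zero =>
      simp only [ballotCount_zero_right, Nat.choose_zero_right] at *
      omega
    | succ j =>
      have := ih (k := j) (by omega)
      rw [Nat.choose_succ_succ']
      omega

theorem stmt11 (n k : ℕ) (hk : 1 ≤ k) (hn : 2 * k ≤ n) :
    Nat.card {b : Fin k → Fin n // ∃ a : Fin k → Fin n, precRel a b} =
      n.choose k - n.choose (k - 1) := by
  obtain ⟨j, rfl⟩ := Nat.exists_eq_add_of_le' hk
  have hcount := ballotCount_add_choose (n := n) (k := j) (by omega)
  rw [ballotCount] at hcount
  rw [← Nat.card_congr (Equiv.subtypeEquivRight (isBallot_iff_exists_precRel hn)),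
    Nat.add_sub_cancel]
  omega
end

section
/- Let n, k ∈ ℕ with n ≥ 2k. For each B ∈ B_{n,k}, let λ(B) be any k-permutation of [n] satisfying λ(B) ≺ B. Then the family of functions { φ_{λ(B),B} : B ∈ B_{n,k} }, regarded as vectors in the real vector space of functions C([n],k) → ℝ, is linearly independent. -/
open Finset

/-- The function φ_{A,B} on k-subsets of [n]. -/
noncomputable def phiAB {n k : ℕ} (a b : Fin k → Fin n) : Finset (Fin n) → ℝ :=
  fun R => if ∀ i, (R ∩ {a i, b i}).card = 1
    then (-1 : ℝ) ^ (R ∩ Finset.image b Finset.univ).card else 0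

/-!
Order `k`-permutations coordinatewise and evaluate at the entry set of `B`: there
`φ_{λ(B), B}` equals `(-1)^k`, while `φ_{λ(C), C}` vanishes unless `B ≤ C`. The family is
therefore triangular, and a maximal index carrying a nonzero coefficient of a vanishing
combination yields a contradiction.
-/

theorem LinearIndependent.of_eval_triangular {ι X K : Type*} [PartialOrder ι] [Ring K]
    [NoZeroDivisors K] {v : ι → X → K} (e : ι → X) (hdiag : ∀ i, v i (e i) ≠ 0)
    (htri : ∀ i j, v j (e i) ≠ 0 → i ≤ j) : LinearIndependent K v := by
  classical
  rw [linearIndependent_iff']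
  intro s g hsum i hi
  by_contra hgi
  obtain ⟨m, -, hm⟩ := (s.filter (g · ≠ 0)).exists_le_maximal (mem_filter.2 ⟨hi, hgi⟩)
  obtain ⟨hms, hgm⟩ := mem_filter.1 hm.prop
  have hval : ∑ j ∈ s, g j * v j (e m) = 0 := by simpa using congrFun hsum (e m)
  rw [sum_eq_single_of_mem m hms] at hval
  · exact mul_ne_zero hgm (hdiag m) hval
  intro j hjs hjm
  by_contra hj
  obtain ⟨hgj, hvj⟩ := mul_ne_zero_iff.1 hj
  exact hjm (hm.eq_of_le (mem_filter.2 ⟨hjs, hgj⟩) (htri m j hvj)).symm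

namespace precRel

variable {n k : ℕ} {a b : Fin k → Fin n}

theorem injective_left (h : precRel a b) : Function.Injective a :=
  h.2.2.comp Sum.inl_injective

theorem left_ne_right (h : precRel a b) (i j : Fin k) : a i ≠ b j :=
  fun heq ↦ Sum.inl_ne_inr (h.2.2 (a₁ := .inl i) (a₂ := .inr j) heq)

theorem disjoint_pairs (h : precRel a b) {i j : Fin k} (hij : i ≠ j) :
    Disjoint ({a i, b i} : Finset (Fin n)) {a j, b j} := by
  simp [h.injective_left.eq_iff, h.1.injective.eq_iff, h.left_ne_right, (h.left_ne_right _ _).symm,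
    hij.symm]

theorem phiAB_image_self (h : precRel a b) : phiAB a b (univ.image b) = (-1) ^ k := by
  have hpair : ∀ i, univ.image b ∩ {a i, b i} = {b i} := fun i ↦ by
    rw [inter_insert_of_notMem (by simpa using fun j ↦ (h.left_ne_right i j).symm),
      inter_singleton_of_mem (mem_image_of_mem b (mem_univ i))]
  simp [phiAB, hpair, card_image_of_injective _ h.1.injective]

theorem le_of_phiAB_image_ne_zero {c : Fin k → Fin n} (h : precRel a c) (hb : StrictMono b)
    (hne : phiAB a c (univ.image b) ≠ 0) : b ≤ c := by
  set S := univ.image b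
  have hone : ∀ j, #(S ∩ {a j, c j}) = 1 := by
    by_contra hc
    simp [phiAB, if_neg hc] at hne
  intro i
  by_contra! hlt
  -- The pairs `{a j, c j}` with `j ≤ i` are disjoint, each meets `S`, and all lie below
  -- `c i < b i`; but only `i` elements of `S` lie below `b i`.
  have hsub : S ∩ (Iic i).biUnion (fun j ↦ {a j, c j}) ⊆ (Iio i).image b := by
    intro x hx
    obtain ⟨hxS, hxU⟩ := mem_inter.1 hx
    obtain ⟨m, -, rfl⟩ := mem_image.1 hxS
    obtain ⟨j, hji, hxj⟩ := mem_biUnion.1 hxU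
    have hbm : b m ≤ c j := by
      rcases mem_insert.1 hxj with hx | hx
      · exact hx ▸ (h.2.1 j).le
      · exact (mem_singleton.1 hx).le
    have hbmi : b m < b i := (hbm.trans (h.1.monotone (mem_Iic.1 hji))).trans_lt hlt
    exact mem_image_of_mem b (mem_Iio.2 (hb.lt_iff_lt.1 hbmi))
  have hcard : #(S ∩ (Iic i).biUnion (fun j ↦ {a j, c j})) = i + 1 := by
    rw [inter_biUnion, card_biUnion fun j _ j' _ hjj' ↦
      (h.disjoint_pairs hjj').mono inter_subset_right inter_subset_right]
    simp [hone]
  have := (card_le_card hsub).trans card_image_le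
  rw [Fin.card_Iio] at this
  omega

end precRel

theorem stmt12_general (n k : ℕ)
    (lam : (Fin k → Fin n) → (Fin k → Fin n))
    (hlam : ∀ b : Fin k → Fin n, (∃ a, precRel a b) → precRel (lam b) b) :
    LinearIndependent ℝ
      (fun B : {b : Fin k → Fin n // ∃ a, precRel a b} =>
        (fun R : {R : Finset (Fin n) // R.card = k} => phiAB (lam B.1) B.1 R.1)) := by
  have hmono (B : {b : Fin k → Fin n // ∃ a, precRel a b}) : StrictMono B.1 :=
    B.2.choose_spec.1
  refine LinearIndependent.of_eval_triangular
    (fun B ↦ ⟨univ.image B.1, by simp [card_image_of_injective _ (hmono B).injective]⟩) ?_ ?_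
  · intro B
    simp [(hlam B.1 B.2).phiAB_image_self]
  · intro B C hC
    exact (hlam C.1 C.2).le_of_phiAB_image_ne_zero (hmono B) hC

theorem stmt12 (n k : ℕ) (hk : 1 ≤ k) (hn : 2 * k ≤ n)
    (lam : (Fin k → Fin n) → (Fin k → Fin n))
    (hlam : ∀ b : Fin k → Fin n, (∃ a, precRel a b) → precRel (lam b) b) :
    LinearIndependent ℝ
      (fun B : {b : Fin k → Fin n // ∃ a, precRel a b} =>
        (fun R : {R : Finset (Fin n) // R.card = k} => phiAB (lam B.1) B.1 R.1)) :=
  stmt12_general n k lam hlam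
end

section
/- Let k ≥ 2 be an integer and let F be a (k,2,k)-pattern satisfying W^k(F) = W^{k−1}(F) = ⋯ = W^{k−g(k)}(F) = 0. Then F is homogeneous. -/
open Finset

/-- Indicator function of a hypergraph, viewed as a real-valued function on finsets. -/
def hyperInd {V : Type*} [DecidableEq V] (G : Finset (Finset V)) : Finset V → ℝ :=
  fun S => if S ∈ G then 1 else 0

/-! Let `P` be the first part. Membership of a `k`-set `R` in `F` depends only on `|R ∩ P|`,
through a 0/1 profile `φ`. Take `a i ∉ P` and `b i ∈ P`: a `k`-set crossing the `r` pairs is a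
choice `s` of the `b i` (the rest being `a i`) together with `k - r` further vertices `C`, so the
level-`r` signed average is proportional to `∑_C ∑_s (-1)^|s| φ(|s| + |C ∩ P|)`, which is
`(-1)^r ∑_C Δ^r φ(|C ∩ P|)`. Going down from `r = k`, the vanishing of `Δ^(r+1) φ` on `[0, k-r-1]`
makes `Δ^r φ` constant on `[0, k-r]`, so `W^r = 0` forces `Δ^r φ = 0` there. Hence
`Δ^r φ 0 = 0` for `k - g(k) ≤ r ≤ k`, which is the system defining `g(k)` with `m = k`, so `φ` is
constant on `[0, k]`. -/

open fwdDiff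

lemma alternating_sum_eq_fwdDiff_iter (φ : ℕ → ℝ) (r j : ℕ) :
    ∑ i ∈ range (r + 1), (-1 : ℝ) ^ i * r.choose i * φ (i + j) = (-1) ^ r * (Δ_[1])^[r] φ j := by
  rw [fwdDiff_iter_eq_sum_shift, mul_sum]
  refine sum_congr rfl fun i hi => ?_
  obtain ⟨d, rfl⟩ := Nat.exists_eq_add_of_le (Nat.lt_succ_iff.1 (mem_range.1 hi))
  rw [Nat.add_sub_cancel_left, zsmul_eq_mul, smul_eq_mul, mul_one, add_comm j, pow_add]
  push_cast
  have : ((-1 : ℝ) ^ d) * (-1) ^ d = 1 := by rw [← pow_add, ← two_mul, pow_mul]; simp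
  linear_combination (-(i + d).choose i * (-1) ^ i * φ (i + j)) * this

lemma sum_neg_one_pow_card_mul_eq_fwdDiff_iter (φ : ℕ → ℝ) (r j : ℕ) :
    ∑ s : Finset (Fin r), (-1 : ℝ) ^ s.card * φ (s.card + j) = (-1) ^ r * (Δ_[1])^[r] φ j := by
  rw [← powerset_univ, sum_powerset_apply_card (fun n => (-1 : ℝ) ^ n * φ (n + j)), card_univ,
    Fintype.card_fin, ← alternating_sum_eq_fwdDiff_iter]
  simp only [nsmul_eq_mul]
  exact sum_congr rfl fun i _ => by ring

lemma eq_zero_of_fwdDiff_iter_eq_zero {φ : ℕ → ℝ} {m : ℕ}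
    (h : ∀ r ≤ m, (Δ_[1])^[r] φ 0 = 0) (i : ℕ) (hi : i ≤ m) : φ i = 0 := by
  have := shift_eq_sum_fwdDiff_iter 1 φ i 0
  simp only [smul_eq_mul, mul_one, zero_add] at this
  rw [this]
  exact sum_eq_zero fun r hr => by
    rw [h r (by simp at hr; omega), smul_zero]

lemma eq_of_fwdDiff_eq_zero {ψ : ℕ → ℝ} {n : ℕ} (h : ∀ j < n, Δ_[1] ψ j = 0) :
    ∀ j ≤ n, ψ j = ψ 0 := by
  intro j hj
  induction j with
  | zero => rfl
  | succ j ih =>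
    have := h j (by omega)
    rw [fwdDiff, sub_eq_zero] at this
    rw [this, ih (by omega)]

lemma fwdDiff_iter_eq_zero_of_const_imp_eq_zero {φ : ℕ → ℝ} {k g : ℕ}
    (hstep : ∀ r, k - g ≤ r → r ≤ k →
      (∀ j ≤ k - r, (Δ_[1])^[r] φ j = (Δ_[1])^[r] φ 0) → (Δ_[1])^[r] φ 0 = 0) :
    ∀ r, k - g ≤ r → r ≤ k → (Δ_[1])^[r] φ 0 = 0 := by
  suffices h : ∀ t ≤ min g k, ∀ j ≤ t, (Δ_[1])^[k - t] φ j = 0 by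
    intro r hgr hrk
    simpa [Nat.sub_sub_self hrk] using h (k - r) (by omega) 0 (Nat.zero_le _)
  intro t
  induction t with
  | zero =>
    intro _ j hj
    obtain rfl := Nat.le_zero.1 hj
    exact hstep k (by omega) le_rfl fun j hj => by
      rw [Nat.sub_self, Nat.le_zero] at hj
      rw [hj]
  | succ t ih =>
    intro ht j hj
    have hconst : ∀ j ≤ t + 1, (Δ_[1])^[k - (t + 1)] φ j = (Δ_[1])^[k - (t + 1)] φ 0 := by
      refine eq_of_fwdDiff_eq_zero fun j hj => ?_
      rw [← Function.iterate_succ_apply' (fwdDiff 1), show (k - (t + 1)).succ = k - t by omega]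
      exact ih (by omega) j (by omega)
    rw [hconst j hj]
    exact hstep _ (by omega) (by omega) fun j hj => hconst j (by omega)

lemma alternating_sum_indicator_eq_zero_iff (α : ℕ → Bool) (r : ℕ) :
    ∑ i ∈ range (r + 1), (-1 : ℤ) ^ i * (r.choose i) * (if α i then 1 else 0) = 0 ↔
      (Δ_[1])^[r] (fun i => if α i then (1 : ℝ) else 0) 0 = 0 := by
  have key : ((∑ i ∈ range (r + 1), (-1 : ℤ) ^ i * (r.choose i) * (if α i then 1 else 0) : ℤ) :
      ℝ) = (-1) ^ r * (Δ_[1])^[r] (fun i => if α i then (1 : ℝ) else 0) 0 := by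
    push_cast [apply_ite]
    simpa using alternating_sum_eq_fwdDiff_iter (fun i => if α i then (1 : ℝ) else 0) r 0
  rw [← Int.cast_eq_zero (α := ℝ), key, mul_eq_zero, or_iff_right (pow_ne_zero _ (by norm_num))]

lemma gDef_spec (k : ℕ) : ∀ m, 2 ≤ m → m ≤ k → ∀ α : ℕ → Bool,
    (∀ r ∈ Icc (m - gDef k) m,
      ∑ i ∈ range (r + 1), (-1 : ℤ) ^ i * (r.choose i) * (if α i then 1 else 0) = 0) →
    ∀ i ≤ m, α i = α 0 := by
  -- `g = k` is admissible: the equations for all `r ≤ m` are then imposed, forcing `α ≡ false`.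
  refine Nat.sInf_mem (s := {g : ℕ | ∀ m : ℕ, 2 ≤ m → m ≤ k → ∀ α : ℕ → Bool,
    (∀ r ∈ Icc (m - g) m,
      ∑ i ∈ range (r + 1), (-1 : ℤ) ^ i * (r.choose i) * (if α i then 1 else 0) = 0) →
    ∀ i ≤ m, α i = α 0}) ⟨k, fun m _ hmk α hα => ?_⟩
  have hzero : ∀ i ≤ m, α i = false := fun i hi => by
    simpa using eq_zero_of_fwdDiff_iter_eq_zero (fun r hr =>
      (alternating_sum_indicator_eq_zero_iff α r).1 (hα r (mem_Icc.2 ⟨by omega, hr⟩))) i hi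
  intro i hi
  rw [hzero i hi, hzero 0 (Nat.zero_le _)]

section Crossing

variable {V : Type*} [DecidableEq V] {r : ℕ}

def crossingSets [Fintype V] (a b : Fin r → V) (k : ℕ) : Finset (Finset V) :=
  (univ.powersetCard k).filter (fun R => ∀ i, (R ∩ {a i, b i}).card = 1)

def pairSupport (a b : Fin r → V) : Finset V := univ.image a ∪ univ.image b

def pairPick (a b : Fin r → V) (s : Finset (Fin r)) (C : Finset V) : Finset V :=
  s.image b ∪ sᶜ.image a ∪ C

lemma card_inter_pair_eq_one_iff {R : Finset V} {x y : V} (hxy : x ≠ y) :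
    (R ∩ {x, y}).card = 1 ↔ (x ∈ R ↔ y ∉ R) := by
  by_cases hx : x ∈ R <;> by_cases hy : y ∈ R <;>
    simp [inter_insert_of_mem, inter_insert_of_notMem, hx, hy, hxy]

variable {a b : Fin r → V} {s : Finset (Fin r)} {C : Finset V}

lemma mem_pairPick_of_notMem_pairSupport {x : V} (hx : x ∉ pairSupport a b) :
    x ∈ pairPick a b s C ↔ x ∈ C := by
  simp only [pairSupport, mem_union, mem_image, mem_univ, true_and, not_or, not_exists] at hx
  simp [pairPick, hx.1, hx.2]

lemma mem_pairPick_left (hab : Function.Injective (Sum.elim a b))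
    (hC : Disjoint C (pairSupport a b)) (i : Fin r) : a i ∈ pairPick a b s C ↔ i ∉ s := by
  obtain ⟨ha, -, hab⟩ := Sum.elim_injective.1 hab
  have haC : a i ∉ C := disjoint_right.1 hC (by simp [pairSupport])
  simp only [pairPick, mem_union, mem_image, mem_compl, haC, or_false]
  constructor
  · rintro (⟨j, -, hji⟩ | ⟨j, hj, hji⟩)
    · exact absurd hji.symm (hab _ _)
    · rwa [← ha hji]
  · exact fun hi => Or.inr ⟨i, hi, rfl⟩

lemma mem_pairPick_right (hab : Function.Injective (Sum.elim a b))
    (hC : Disjoint C (pairSupport a b)) (i : Fin r) : b i ∈ pairPick a b s C ↔ i ∈ s := by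
  obtain ⟨-, hb, hab⟩ := Sum.elim_injective.1 hab
  have hbC : b i ∉ C := disjoint_right.1 hC (by simp [pairSupport])
  simp only [pairPick, mem_union, mem_image, mem_compl, hbC, or_false]
  constructor
  · rintro (⟨j, hj, hji⟩ | ⟨j, -, hji⟩)
    · rwa [← hb hji]
    · exact absurd hji (hab _ _)
  · exact fun hi => Or.inl ⟨i, hi, rfl⟩

lemma pairPick_sdiff_pairSupport (hC : Disjoint C (pairSupport a b)) :
    pairPick a b s C \ pairSupport a b = C := by
  ext x
  by_cases hx : x ∈ pairSupport a b
  · simp [hx, disjoint_right.1 hC hx]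
  · simp [hx, mem_pairPick_of_notMem_pairSupport hx]

lemma filter_mem_pairPick (hab : Function.Injective (Sum.elim a b))
    (hC : Disjoint C (pairSupport a b)) : univ.filter (fun i => b i ∈ pairPick a b s C) = s := by
  ext i
  simp [mem_pairPick_right hab hC]

lemma card_pairPick_inter (hab : Function.Injective (Sum.elim a b))
    (hC : Disjoint C (pairSupport a b)) {P : Finset V} (haP : ∀ i, a i ∉ P) (hbP : ∀ i, b i ∈ P) :
    (pairPick a b s C ∩ P).card = s.card + (C ∩ P).card := by
  have hsplit : pairPick a b s C ∩ P = s.image b ∪ (C ∩ P) := by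
    ext x
    simp only [pairPick, mem_inter, mem_union, mem_image, mem_compl]
    constructor
    · rintro ⟨(⟨i, hi, rfl⟩ | ⟨i, -, rfl⟩) | hx, hxP⟩
      · exact Or.inl ⟨i, hi, rfl⟩
      · exact absurd hxP (haP i)
      · exact Or.inr ⟨hx, hxP⟩
    · rintro (⟨i, hi, rfl⟩ | ⟨hx, hxP⟩)
      · exact ⟨Or.inl (Or.inl ⟨i, hi, rfl⟩), hbP i⟩
      · exact ⟨Or.inr hx, hxP⟩
  have hdisj : Disjoint (s.image b) (C ∩ P) :=
    disjoint_of_subset_right inter_subset_left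
      (disjoint_of_subset_left (by intro x; simp [pairSupport]; grind) hC.symm)
  rw [hsplit, card_union_of_disjoint hdisj,
    card_image_of_injective _ (Sum.elim_injective.1 hab).2.1]

lemma card_pairPick_inter_image_right (hab : Function.Injective (Sum.elim a b))
    (hC : Disjoint C (pairSupport a b)) : (pairPick a b s C ∩ univ.image b).card = s.card := by
  have hCb : C ∩ univ.image b = ∅ :=
    disjoint_iff_inter_eq_empty.1 (disjoint_of_subset_right subset_union_right hC)
  have haB : ∀ i, a i ∉ univ.image b := fun i => by
    simpa [eq_comm] using (Sum.elim_injective.1 hab).2.2 i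
  rw [card_pairPick_inter hab hC haB (fun i => mem_image_of_mem b (mem_univ i)), hCb, card_empty,
    add_zero]

lemma card_pairPick (hab : Function.Injective (Sum.elim a b)) (hC : Disjoint C (pairSupport a b)) :
    (pairPick a b s C).card = r + C.card := by
  obtain ⟨ha, hb, hab⟩ := Sum.elim_injective.1 hab
  have hdisj : Disjoint (s.image b) (sᶜ.image a) := by
    simp only [disjoint_left, mem_image, mem_compl, not_exists, not_and]
    rintro x ⟨i, -, rfl⟩ j - hji
    exact hab _ _ hji
  have hsub : s.image b ∪ sᶜ.image a ⊆ pairSupport a b := by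
    intro x
    simp only [pairSupport, mem_union, mem_image, mem_univ, true_and]
    grind
  rw [pairPick, card_union_of_disjoint (disjoint_of_subset_left hsub hC.symm),
    card_union_of_disjoint hdisj, card_image_of_injective _ hb, card_image_of_injective _ ha,
    card_compl, Fintype.card_fin]
  have := card_le_univ s
  simp only [Fintype.card_fin] at this
  omega

lemma pairPick_mem_crossingSets [Fintype V] (hab : Function.Injective (Sum.elim a b))
    (hC : Disjoint C (pairSupport a b)) {k : ℕ} (hrk : r ≤ k) (hCk : C.card = k - r) :
    pairPick a b s C ∈ crossingSets a b k := by
  refine mem_filter.2 ⟨mem_powersetCard_univ.2 ?_, fun i => ?_⟩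
  · rw [card_pairPick hab hC]
    omega
  · rw [card_inter_pair_eq_one_iff ((Sum.elim_injective.1 hab).2.2 i i), mem_pairPick_left hab hC,
      mem_pairPick_right hab hC]

lemma pairPick_filter_sdiff [Fintype V] (hab : Function.Injective (Sum.elim a b)) {R : Finset V}
    (hR : ∀ i, (R ∩ {a i, b i}).card = 1) :
    pairPick a b (univ.filter (fun i => b i ∈ R)) (R \ pairSupport a b) = R := by
  have hC : Disjoint (R \ pairSupport a b) (pairSupport a b) := sdiff_disjoint
  ext x
  by_cases hx : x ∈ pairSupport a b
  · simp only [pairSupport, mem_union, mem_image, mem_univ, true_and] at hx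
    obtain ⟨i, rfl⟩ | ⟨i, rfl⟩ := hx
    · rw [mem_pairPick_left hab hC,
        (card_inter_pair_eq_one_iff ((Sum.elim_injective.1 hab).2.2 i i)).1 (hR i)]
      simp
    · rw [mem_pairPick_right hab hC]
      simp
  · rw [mem_pairPick_of_notMem_pairSupport hx, mem_sdiff, and_iff_left hx]

lemma sum_crossingSets_eq [Fintype V] {M : Type*} [AddCommMonoid M]
    (hab : Function.Injective (Sum.elim a b)) {k : ℕ} (hrk : r ≤ k) (g : Finset V → M) :
    ∑ R ∈ crossingSets a b k, g R =
      ∑ C ∈ (pairSupport a b)ᶜ.powersetCard (k - r),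
        ∑ s : Finset (Fin r), g (pairPick a b s C) := by
  rw [← sum_product']
  refine sum_nbij' (fun R => (R \ pairSupport a b, univ.filter (fun i => b i ∈ R)))
    (fun p => pairPick a b p.2 p.1) ?_ ?_ ?_ ?_ ?_
  · intro R hR
    obtain ⟨hRk, hRc⟩ := mem_filter.1 hR
    have hcard := card_pairPick (s := univ.filter (fun i => b i ∈ R)) hab
      (sdiff_disjoint : Disjoint (R \ pairSupport a b) _)
    rw [pairPick_filter_sdiff hab hRc, (mem_powersetCard_univ.1 hRk)] at hcard
    simp only [mem_product, mem_powersetCard, mem_univ, and_true]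
    exact ⟨fun x hx => mem_compl.2 (mem_sdiff.1 hx).2, by omega⟩
  · rintro ⟨C, s⟩ hp
    simp only [mem_product, mem_powersetCard, mem_univ, and_true] at hp
    exact pairPick_mem_crossingSets hab (subset_compl_iff_disjoint_right.1 hp.1) hrk hp.2
  · intro R hR
    exact pairPick_filter_sdiff hab (mem_filter.1 hR).2
  · rintro ⟨C, s⟩ hp
    simp only [mem_product, mem_powersetCard, mem_univ, and_true] at hp
    have hC := subset_compl_iff_disjoint_right.1 hp.1
    exact Prod.ext (pairPick_sdiff_pairSupport hC) (filter_mem_pairPick hab hC)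
  · intro R hR
    rw [pairPick_filter_sdiff hab (mem_filter.1 hR).2]

lemma exists_injective_sumElim_of_le [Fintype V] {P : Finset V} (hP : r ≤ P.card)
    (hPc : r ≤ Pᶜ.card) :
    ∃ a b : Fin r → V, Function.Injective (Sum.elim a b) ∧ (∀ i, a i ∉ P) ∧ ∀ i, b i ∈ P := by
  obtain ⟨ea⟩ := Function.Embedding.nonempty_of_card_le (α := Fin r) (β := ↥Pᶜ)
    (by rwa [Fintype.card_fin, Fintype.card_coe])
  obtain ⟨eb⟩ := Function.Embedding.nonempty_of_card_le (α := Fin r) (β := ↥P)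
    (by rwa [Fintype.card_fin, Fintype.card_coe])
  refine ⟨fun i => ea i, fun i => eb i, Sum.elim_injective.2 ⟨?_, ?_, ?_⟩,
    fun i => mem_compl.1 (ea i).2, fun i => (eb i).2⟩
  · exact Subtype.val_injective.comp ea.injective
  · exact Subtype.val_injective.comp eb.injective
  · exact fun i j h => mem_compl.1 (ea i).2 (h ▸ (eb j).2)

lemma sum_crossingSets_eq_zero_of_signedAvg_eq_zero [Fintype V] {k : ℕ} {f : Finset V → ℝ}
    (h : signedAvg k f a b = 0) :
    ∑ R ∈ crossingSets a b k, (-1 : ℝ) ^ (R ∩ univ.image b).card * f R = 0 := by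
  rcases div_eq_zero_iff.1 h with h | h
  · exact h
  · rw [Nat.cast_eq_zero, card_eq_zero] at h
    rw [crossingSets, h, sum_empty]

lemma signedAvg_eq_zero_of_Wpow_eq_zero [Fintype V] {k : ℕ} {f : Finset V → ℝ}
    (hW : Wpow k r f = 0) (hab : Function.Injective (Sum.elim a b)) : signedAvg k f a b = 0 := by
  set Φ := (univ : Finset ((Fin r → V) × (Fin r → V))).filter
    (fun p => Function.Injective (Sum.elim p.1 p.2))
  have hmem : (a, b) ∈ Φ := mem_filter.2 ⟨mem_univ _, hab⟩
  have hpos : (0 : ℝ) < Φ.card := by exact_mod_cast card_pos.2 ⟨_, hmem⟩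
  have hle : ∑ p ∈ Φ, signedAvg k f p.1 p.2 ^ 2 ≤ 0 := by
    have := Real.sqrt_eq_zero'.1 hW
    rwa [div_le_iff₀ hpos, zero_mul] at this
  have hsq := (sum_eq_zero_iff_of_nonneg fun p _ => sq_nonneg (signedAvg k f p.1 p.2)).1
    (le_antisymm hle (sum_nonneg fun p _ => sq_nonneg _)) _ hmem
  exact pow_eq_zero_iff two_ne_zero |>.1 hsq

lemma fwdDiff_iter_eq_zero_of_Wpow_eq_zero [Fintype V] {k : ℕ} (hrk : r ≤ k) {P : Finset V}
    (hP : r ≤ P.card) (hPc : r ≤ Pᶜ.card) (hV : k + r ≤ Fintype.card V) {φ : ℕ → ℝ}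
    {f : Finset V → ℝ} (hf : ∀ R : Finset V, R.card = k → f R = φ (R ∩ P).card)
    (hW : Wpow k r f = 0) (hconst : ∀ j ≤ k - r, (Δ_[1])^[r] φ j = (Δ_[1])^[r] φ 0) :
    (Δ_[1])^[r] φ 0 = 0 := by
  obtain ⟨a, b, hab, haP, hbP⟩ := exists_injective_sumElim_of_le hP hPc
  have hsum := sum_crossingSets_eq_zero_of_signedAvg_eq_zero
    (signedAvg_eq_zero_of_Wpow_eq_zero hW hab)
  rw [sum_crossingSets_eq hab hrk] at hsum
  have hterm : ∀ C ∈ (pairSupport a b)ᶜ.powersetCard (k - r),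
      ∑ s : Finset (Fin r), (-1 : ℝ) ^ (pairPick a b s C ∩ univ.image b).card *
        f (pairPick a b s C) = (-1) ^ r * (Δ_[1])^[r] φ 0 := by
    intro C hC
    obtain ⟨hCsub, hCk⟩ := mem_powersetCard.1 hC
    have hCd := subset_compl_iff_disjoint_right.1 hCsub
    calc _ = ∑ s : Finset (Fin r), (-1 : ℝ) ^ s.card * φ (s.card + (C ∩ P).card) := by
          refine sum_congr rfl fun s _ => ?_
          rw [card_pairPick_inter_image_right hab hCd, hf _ (by rw [card_pairPick hab hCd]; omega),
            card_pairPick_inter hab hCd haP hbP]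
      _ = (-1) ^ r * (Δ_[1])^[r] φ (C ∩ P).card := sum_neg_one_pow_card_mul_eq_fwdDiff_iter _ _ _
      _ = (-1) ^ r * (Δ_[1])^[r] φ 0 := by
          rw [hconst _ (hCk ▸ card_le_card inter_subset_left)]
  have hsupp : (pairSupport a b).card ≤ r + r := by
    simpa [pairSupport] using (card_union_le _ _).trans
      (add_le_add (card_image_le (s := univ) (f := a)) (card_image_le (s := univ) (f := b)))
  have hcard : k - r ≤ (pairSupport a b)ᶜ.card := by
    rw [card_compl]
    omega
  rw [sum_congr rfl hterm, sum_const, nsmul_eq_mul] at hsum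
  have hN : ((pairSupport a b)ᶜ.powersetCard (k - r)).card ≠ 0 :=
    (card_pos.2 (powersetCard_nonempty.2 hcard)).ne'
  rcases mul_eq_zero.1 hsum with h | h
  · exact absurd (Nat.cast_eq_zero.1 h) hN
  · exact (mul_eq_zero.1 h).resolve_left (pow_ne_zero _ (by norm_num))

end Crossing

lemma exists_profile_of_card_inter_eq {V : Type*} [DecidableEq V] {F : Finset (Finset V)}
    {P : Finset V} {k : ℕ} (h : ∀ S T : Finset V, S.card = k → T.card = k →
      (S ∩ P).card = (T ∩ P).card → (S ∈ F ↔ T ∈ F)) :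
    ∃ α : ℕ → Bool, ∀ S : Finset V, S.card = k → (S ∈ F ↔ α (S ∩ P).card = true) := by
  classical
  refine ⟨fun j => decide (∃ T ∈ F, T.card = k ∧ (T ∩ P).card = j), fun S hS => ?_⟩
  simp only [decide_eq_true_eq]
  exact ⟨fun hSF => ⟨S, hSF, hS, rfl⟩, fun ⟨T, hTF, hT, hTS⟩ => (h S T hS hT hTS.symm).2 hTF⟩

theorem stmt19_general (k : ℕ) (hk : 2 ≤ k)
    (F : Finset (Finset (Fin (2 * k)))) (parts : Fin 2 → Finset (Fin (2 * k)))
    (hcard : ∀ i, (parts i).card = k)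
    (hdisj : ∀ i j, i ≠ j → Disjoint (parts i) (parts j))
    (hpat : ∀ S T : Finset (Fin (2 * k)), S.card = k → T.card = k →
      (∀ i, (S ∩ parts i).card = (T ∩ parts i).card) → (S ∈ F ↔ T ∈ F))
    (hW : ∀ r : ℕ, k - gDef k ≤ r → r ≤ k → Wpow k r (hyperInd F) = 0) :
    (∀ S : Finset (Fin (2 * k)), S.card = k → S ∈ F) ∨
    (∀ S : Finset (Fin (2 * k)), S.card = k → S ∉ F) := by
  set P := parts 0
  have hPc : parts 1 = Pᶜ := eq_of_subset_of_card_le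
    (subset_compl_iff_disjoint_right.2 (hdisj 1 0 (by decide)))
    (by rw [card_compl, Fintype.card_fin, hcard, hcard]; omega)
  have hcompl : ∀ S : Finset (Fin (2 * k)), (S ∩ Pᶜ).card = S.card - (S ∩ P).card := fun S => by
    rw [← sdiff_eq_inter_compl, ← card_sdiff_add_card_inter S P, Nat.add_sub_cancel]
  obtain ⟨α, hα⟩ := exists_profile_of_card_inter_eq (F := F) (P := P) fun S T hS hT h =>
    hpat S T hS hT (Fin.forall_fin_two.2 ⟨h, by rw [hPc, hcompl, hcompl, hS, hT, h]⟩)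
  set φ : ℕ → ℝ := fun j => if α j then 1 else 0
  have hf : ∀ R, R.card = k → hyperInd F R = φ (R ∩ P).card := fun R hR => by
    simp only [hyperInd, φ, hα R hR]
  have hΔ := fwdDiff_iter_eq_zero_of_const_imp_eq_zero fun r hgr hrk =>
    fwdDiff_iter_eq_zero_of_Wpow_eq_zero hrk (by rw [hcard]; omega)
      (by rw [← hPc, hcard]; omega) (by rw [Fintype.card_fin]; omega) hf (hW r hgr hrk)
  have hconst : ∀ i ≤ k, α i = α 0 := gDef_spec k k hk le_rfl α fun r hr =>
    (alternating_sum_indicator_eq_zero_iff α r).2 (hΔ r (mem_Icc.1 hr).1 (mem_Icc.1 hr).2)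
  have hFα : ∀ S : Finset (Fin (2 * k)), S.card = k → (S ∈ F ↔ α 0 = true) := fun S hS => by
    rw [hα S hS, hconst _ ((card_le_card inter_subset_left).trans hS.le)]
  cases h : α 0
  · exact Or.inr fun S hS => by simp [hFα S hS, h]
  · exact Or.inl fun S hS => by simp [hFα S hS, h]

theorem stmt19 (k : ℕ) (hk : 2 ≤ k)
    (F : Finset (Finset (Fin (2 * k)))) (parts : Fin 2 → Finset (Fin (2 * k)))
    (hunif : ∀ e ∈ F, e.card = k)
    (hcard : ∀ i, (parts i).card = k)
    (hdisj : ∀ i j, i ≠ j → Disjoint (parts i) (parts j))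
    (hpat : ∀ S T : Finset (Fin (2 * k)), S.card = k → T.card = k →
      (∀ i, (S ∩ parts i).card = (T ∩ parts i).card) → (S ∈ F ↔ T ∈ F))
    (hW : ∀ r : ℕ, k - gDef k ≤ r → r ≤ k → Wpow k r (hyperInd F) = 0) :
    (∀ S : Finset (Fin (2 * k)), S.card = k → S ∈ F) ∨
    (∀ S : Finset (Fin (2 * k)), S.card = k → S ∉ F) :=
  stmt19_general k hk F parts hcard hdisj hpat hW
end
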